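/- A uniform preorder (A,R) is a DCO (every r ∈ R is single-valued) if and only if the identity predicate id_A ∈ fam(A,R)(A) is discrete, i.e. for every surjection e : K ↠ J, function f : K → A, and predicate φ : J → A with φ∘e ≤ f in fam(A,R)(K), there exists g : J → A with g∘e = f. -/
import Mathlib


universe u

/-- `R` is a uniform preorder structure on `A`. -/
def IsUPO {A : Type u} (R : Set (Set (A × A))) : Prop :=
  {p : A × A | p.1 = p.2} ∈ R ∧
  (∀ r ∈ R, ∀ s ∈ R, {p : A × A | ∃ b, (p.1, b) ∈ r ∧ (b, p.2) ∈ s} ∈ R) ∧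
  (∀ r ∈ R, ∀ s, s ⊆ r → s ∈ R)

theorem stmt_15 {A : Type u} (R : Set (Set (A × A))) (hR : IsUPO R) :
    -- (A,R) is a DCO, i.e. every r ∈ R is single-valued, ...
    (∀ r ∈ R, ∀ a b b' : A, (a, b) ∈ r → (a, b') ∈ r → b = b') ↔
    -- ... iff the identity predicate id_A ∈ fam(A,R)(A) is discrete
    (∀ (K J : Type u) (e : K → J), Function.Surjective e →
      ∀ (f : K → A) (φ : J → A),
        Set.range (fun k => (φ (e k), f k)) ∈ R →
        ∃ g : J → A, g ∘ e = f) := by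
  constructor
  · intro hsv K J e he f φ hr
    refine ⟨fun j => f (Classical.choose (he j)), ?_⟩
    funext k
    have hk' : e (Classical.choose (he (e k))) = e k := Classical.choose_spec (he (e k))
    exact hsv _ hr (φ (e k)) _ _
      (by rw [← hk']; exact ⟨Classical.choose (he (e k)), rfl⟩) ⟨k, rfl⟩
  · intro hdisc r hrR a b b' hb hb'
    have hs : ({(a, b), (a, b')} : Set (A × A)) ∈ R := by
      refine hR.2.2 r hrR _ ?_
      intro p hp
      rcases hp with h | h <;> subst h <;> assumption
    obtain ⟨g, hg⟩ := hdisc (ULift Bool) (ULift Unit) (fun _ => ⟨()⟩)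
      (fun j => ⟨⟨true⟩, rfl⟩)
      (fun k => if k.down then b else b') (fun _ => a)
      (by
        refine hR.2.2 _ hs _ ?_
        rintro p ⟨k, rfl⟩
        rcases k with ⟨_ | _⟩
        · right; rfl
        · left; rfl)
    have h1 : g ⟨()⟩ = b := congrFun hg ⟨true⟩
    have h2 : g ⟨()⟩ = b' := congrFun hg ⟨false⟩
    rw [← h1, h2]
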